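/- For all n ≥ 0 and r ≥ 1, the r-Bell numbers satisfy B_{n+1,r} = r·B_{n,r} + B_{n,r+1}. -/

import Mathlib

open Finset

/-- The r-Stirling numbers of the second kind `S_r(n,k)`. -/
def rStirling2 (r : ℕ) : ℕ → ℕ → ℕ
  | 0, 0 => 1
  | 0, _ + 1 => 0
  | n + 1, 0 => r * rStirling2 r n 0
  | n + 1, k + 1 => rStirling2 r n k + (k + 1 + r) * rStirling2 r n (k + 1)

/-- The r-Bell numbers `B_{n,r}`. -/
def rBell (n r : ℕ) : ℕ := ∑ k ∈ range (n + 1), rStirling2 r n k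

/-! The recurrence comes from summing the defining recurrence of `S_r(n+1,k)` over `k` and
recognising `S_r(n,k) + (k+1) S_r(n,k+1)` as `S_{r+1}(n,k)`. -/

theorem rStirling2_eq_zero_of_lt (r : ℕ) {n k : ℕ} (h : n < k) : rStirling2 r n k = 0 := by
  induction n generalizing k with
  | zero => obtain ⟨k, rfl⟩ := Nat.exists_eq_add_one_of_ne_zero h.ne'; rfl
  | succ n ih =>
    obtain ⟨k, rfl⟩ := Nat.exists_eq_add_one_of_ne_zero (Nat.ne_zero_of_lt h)
    simp only [rStirling2, ih (by omega : n < k), ih (by omega : n < k + 1), mul_zero, add_zero]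

theorem rStirling2_succ (r n k : ℕ) :
    rStirling2 (r + 1) n k = rStirling2 r n k + (k + 1) * rStirling2 r n (k + 1) := by
  induction n generalizing k with
  | zero => cases k <;> simp [rStirling2]
  | succ n ih => cases k <;> simp only [rStirling2, ih] <;> ring

theorem rBell_eq_sum_range_add_two (n r : ℕ) :
    rBell n r = ∑ k ∈ range (n + 2), rStirling2 r n k := by
  rw [sum_range_succ, rStirling2_eq_zero_of_lt r n.lt_succ_self, add_zero, rBell]

theorem rBell_succ_general (n r : ℕ) :
    rBell (n + 1) r = r * rBell n r + rBell n (r + 1) := by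
  calc rBell (n + 1) r
      = ∑ k ∈ range (n + 1), (rStirling2 r n k + (k + 1 + r) * rStirling2 r n (k + 1))
          + r * rStirling2 r n 0 := sum_range_succ' _ _
    _ = r * (∑ k ∈ range (n + 1), rStirling2 r n (k + 1) + rStirling2 r n 0)
          + ∑ k ∈ range (n + 1), (rStirling2 r n k + (k + 1) * rStirling2 r n (k + 1)) := by
      simp only [add_mul, mul_add, sum_add_distrib, mul_sum]
      ring
    _ = r * rBell n r + rBell n (r + 1) := by
      rw [rBell_eq_sum_range_add_two, sum_range_succ' _ (n + 1), rBell]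
      simp only [rStirling2_succ]

theorem rBell_succ (n r : ℕ) (hr : 1 ≤ r) :
    rBell (n + 1) r = r * rBell n r + rBell n (r + 1) :=
  rBell_succ_general n r
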